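/- arXiv:2401.06691 — 2 statements merged into one kernel-verified Lean document; each statement's English description precedes it below -/
import Mathlib

section
/- For fixed positive integers a, b, j, and any element W = UP in the image of N_j : brew(j,a+b) × SH(a,b) → ℕ₀^{j×(a+b)}, write W = A·diag(U₁,U₂) with A ∈ QSH(u₁,u₂;j), U₁ ∈ brew(u₁,a), U₂ ∈ brew(u₂,b) (such a decomposition exists and is unique). Then the cardinality of the preimage N_j^{-1}(W) equals U!/(U₁!·U₂!), where the factorial of a brew-matrix is the product of factorials of the parts of its corresponding composition. -/
/-!
All matrices in play are one-hot: `oneHot f` has the basis vector `e (f c)` as its column `c`,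
and `oneHot f * oneHot g = oneHot (f ∘ g)`. The decomposition `W = A · diag(U₁, U₂)` says that
the column map of `W` is `f₁ ⊔ f₂` with `f₁ = ι_A ∘ ι₁` and `f₂ = κ_A ∘ ι₂` monotone.

If `U' P' = W` with `U' = oneHot ι'` a brew matrix and `P'` the shuffle of `(q₁, q₂)`, then
`ι' ∘ q₁ = f₁` and `ι' ∘ q₂ = f₂`, so the fibres of `ι'` have sizes `m₁ i + m₂ i`, where `m₁`,
`m₂` count the fibres of `f₁`, `f₂`. A monotone map on `Fin n` is determined by its fibre sizes,
hence `U' = U`. A shuffle is determined by the set `S` of positions of its first block, and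
compatibility with `ι` says exactly that `S` meets the fibre `ι⁻¹ i` in `m₁ i` points. The fibre
of `N_j` therefore has `∏ i, C(m₁ i + m₂ i, m₁ i)` elements, while `U! = ∏ i, (m₁ i + m₂ i)!` and,
`ι_A` and `κ_A` being injective, `U₁! · U₂! = ∏ i, (m₁ i)! · (m₂ i)!`.
-/

/-- `IsBrew M`: `M` is the one-hot matrix encoding of a composition, i.e. its columns are
standard basis vectors `e_{ι j}` with `ι` weakly increasing, surjective, and with
consecutive increments at most `1`. -/
def IsBrew {v ℓ : ℕ} (M : Matrix (Fin v) (Fin ℓ) ℕ) : Prop :=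
  ∃ ι : Fin ℓ → Fin v, Monotone ι ∧ Function.Surjective ι ∧
    (∀ (j : ℕ) (h : j + 1 < ℓ),
      ((ι ⟨j + 1, h⟩ : Fin v) : ℕ) ≤ ((ι ⟨j, Nat.lt_of_succ_lt h⟩ : Fin v) : ℕ) + 1) ∧
    M = Matrix.of fun i j => if i = ι j then 1 else 0

/-- `IsQSH M` (for `M` of size `j × (m+s)`): the columns of `M` are standard basis vectors
`e_{ι₁},…,e_{ι_m},e_{κ₁},…,e_{κ_s}` with `ι` and `κ` strictly increasing, and `M` is right
invertible (every standard basis vector occurs as a column). -/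
def IsQSH {m s j : ℕ} (M : Matrix (Fin j) (Fin (m + s)) ℕ) : Prop :=
  ∃ ι : Fin m → Fin j, ∃ κ : Fin s → Fin j, StrictMono ι ∧ StrictMono κ ∧
    Function.Surjective (Sum.elim ι κ) ∧
    M = Matrix.of fun r c =>
      Sum.elim (fun p => if r = ι p then 1 else 0) (fun q => if r = κ q then 1 else 0)
        (finSumFinEquiv.symm c)

/-- `IsSH M`: `M` is a shuffle permutation matrix
`[e_{ι₁} ⋯ e_{ι_a} e_{κ₁} ⋯ e_{κ_b}]` with `ι`, `κ` strictly increasing. -/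
def IsSH {a b : ℕ} (M : Matrix (Fin (a + b)) (Fin (a + b)) ℕ) : Prop :=
  ∃ ι : Fin a → Fin (a + b), ∃ κ : Fin b → Fin (a + b), StrictMono ι ∧ StrictMono κ ∧
    Function.Bijective (Sum.elim ι κ) ∧
    M = Matrix.of fun r c =>
      Sum.elim (fun p => if r = ι p then 1 else 0) (fun q => if r = κ q then 1 else 0)
        (finSumFinEquiv.symm c)

/-- Block-diagonal concatenation `diag(U₁, U₂)` of rectangular matrices. -/
def blockDiag {u₁ u₂ a b : ℕ} (U₁ : Matrix (Fin u₁) (Fin a) ℕ)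
    (U₂ : Matrix (Fin u₂) (Fin b) ℕ) : Matrix (Fin (u₁ + u₂)) (Fin (a + b)) ℕ :=
  Matrix.reindex finSumFinEquiv finSumFinEquiv (Matrix.fromBlocks U₁ 0 0 U₂)

/-- The factorial `U!` of a brew matrix: the product of the factorials of the parts of
its corresponding composition (the parts are the row sums). -/
def brewFact {v ℓ : ℕ} (M : Matrix (Fin v) (Fin ℓ) ℕ) : ℕ :=
  ∏ i : Fin v, Nat.factorial (∑ j : Fin ℓ, M i j)

open Finset Function

theorem Monotone.eq_of_card_fiber_eq {β : Type*} [PartialOrder β] [DecidableEq β] {n : ℕ}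
    {f g : Fin n → β} (hf : Monotone f) (hg : Monotone g)
    (h : ∀ i, #{x | f x = i} = #{x | g x = i}) : f = g := by
  refine List.ofFn_injective <| List.Perm.eq_of_pairwise'
    hf.sortedLE_ofFn.pairwise hg.sortedLE_ofFn.pairwise ?_
  rw [← Multiset.coe_eq_coe, ← Fin.univ_val_map, ← Fin.univ_val_map]
  ext i
  simp only [Multiset.count_map, eq_comm (a := i)]
  exact h i

section OneHot

variable {α β γ : Type*} [DecidableEq α]

def oneHot (f : β → α) : Matrix α β ℕ :=
  Matrix.of fun i c => if i = f c then 1 else 0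

theorem oneHot_mul_oneHot [Fintype β] [DecidableEq β] (f : β → α) (g : γ → β) :
    oneHot f * oneHot g = oneHot (f ∘ g) := by
  ext i c
  simp [oneHot, Matrix.mul_apply]

theorem oneHot_injective : Injective (oneHot : (β → α) → Matrix α β ℕ) := by
  intro f g h
  funext c
  simpa [oneHot] using congrFun (congrFun h (f c)) c

theorem sum_oneHot_apply [Fintype β] (f : β → α) (i : α) :
    ∑ c, oneHot f i c = #{c | f c = i} := by
  simp [oneHot, eq_comm]

theorem fromBlocks_oneHot {α' β' : Type*} [DecidableEq α'] (f : β → α) (f' : β' → α') :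
    Matrix.fromBlocks (oneHot f) 0 0 (oneHot f') = oneHot (Sum.map f f') := by
  ext (i | i) (c | c) <;> simp [oneHot]

theorem reindex_oneHot {α' β' : Type*} [DecidableEq α'] (e : α ≃ α') (e' : β ≃ β')
    (f : β → α) :
    Matrix.reindex e e' (oneHot f) = oneHot (e ∘ f ∘ e'.symm) := by
  ext i c
  simp [oneHot, Equiv.symm_apply_eq]

end OneHot

section Shuffle

variable {a b n : ℕ}

def IsShuffle (p₁ : Fin a → Fin n) (p₂ : Fin b → Fin n) : Prop :=
  StrictMono p₁ ∧ StrictMono p₂ ∧ Bijective (Sum.elim p₁ p₂)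

theorem IsShuffle.image_right_eq_compl {p₁ : Fin a → Fin n} {p₂ : Fin b → Fin n}
    (hp : IsShuffle p₁ p₂) :
    univ.image p₂ = (univ.image p₁)ᶜ := by
  obtain ⟨-, -, hinj, hsurj⟩ := hp
  obtain ⟨-, -, hdisj⟩ := Sum.elim_injective.1 hinj
  ext k
  simp only [mem_image, mem_univ, true_and, mem_compl, not_exists]
  constructor
  · rintro ⟨y, rfl⟩ x
    exact hdisj x y
  · intro hk
    obtain ⟨x | y, rfl⟩ := hsurj k
    exacts [absurd rfl (hk x), ⟨y, rfl⟩]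

theorem IsShuffle.eq_of_image_left_eq {p₁ q₁ : Fin a → Fin n} {p₂ q₂ : Fin b → Fin n}
    (hp : IsShuffle p₁ p₂) (hq : IsShuffle q₁ q₂) (h : univ.image p₁ = univ.image q₁) :
    p₁ = q₁ ∧ p₂ = q₂ := by
  have range_eq {m : ℕ} {f g : Fin m → Fin n} (hf : StrictMono f) (hg : StrictMono g)
      (h : univ.image f = univ.image g) : f = g := by
    rw [← hf.range_inj hg, ← Set.image_univ, ← Set.image_univ, ← coe_univ, ← coe_image,
      ← coe_image, h]
  exact ⟨range_eq hp.1 hq.1 h,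
    range_eq hp.2.1 hq.2.1 (by rw [hp.image_right_eq_compl, hq.image_right_eq_compl, h])⟩

theorem isShuffle_orderEmbOfFin (S : Finset (Fin n)) (hS : #S = a) (hSc : #Sᶜ = b) :
    IsShuffle (S.orderEmbOfFin hS) (Sᶜ.orderEmbOfFin hSc) := by
  refine ⟨(S.orderEmbOfFin hS).strictMono, (Sᶜ.orderEmbOfFin hSc).strictMono, ?_⟩
  convert (finSumEquivOfFinset hS hSc).bijective
  ext (x | y) <;> rfl

end Shuffle

theorem card_fiber_eq_add_of_bijective_sumElim {α β γ δ : Type*} [Fintype α] [Fintype β]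
    [Fintype γ] [DecidableEq δ] {p₁ : α → γ} {p₂ : β → γ} (hp : Bijective (Sum.elim p₁ p₂))
    (g : γ → δ) (i : δ) :
    #{k | g k = i} = #{x | g (p₁ x) = i} + #{y | g (p₂ y) = i} := by
  simp only [card_filter]
  rw [← Fintype.sum_bijective _ hp (fun s => if g (Sum.elim p₁ p₂ s) = i then 1 else 0) _
    fun _ => rfl, Fintype.sum_sum_type]
  rfl

theorem card_filter_image_of_injective {α β γ : Type*} [Fintype α] [DecidableEq β] [DecidableEq γ]
    {p : α → β} (hp : Injective p) (g : β → γ) (i : γ) :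
    #{k ∈ univ.image p | g k = i} = #{x | g (p x) = i} := by
  rw [filter_image, card_image_of_injective _ hp]

theorem card_finset_of_card_fiber {α β : Type*} [Fintype α] [DecidableEq α] [Fintype β]
    [DecidableEq β] (g : α → β) (m : β → ℕ) :
    Nat.card {S : Finset α // ∀ i, #{x ∈ S | g x = i} = m i} =
      ∏ i, (#{x | g x = i}).choose (m i) := by
  have filter_biUnion (t : ∀ i, powersetCard (m i) {x | g x = i}) (i : β) :
      {x ∈ univ.biUnion fun i => (t i : Finset α) | g x = i} = t i := by
    ext x
    have ht : ∀ i, ∀ x ∈ (t i : Finset α), g x = i := fun i x hx =>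
      (mem_filter.1 ((mem_powersetCard.1 (t i).2).1 hx)).2
    simp only [mem_filter, mem_biUnion, mem_univ, true_and]
    constructor
    · rintro ⟨⟨i', hx⟩, rfl⟩
      rwa [ht i' x hx]
    · intro hx
      exact ⟨⟨i, hx⟩, ht i x hx⟩
  let e : {S : Finset α // ∀ i, #{x ∈ S | g x = i} = m i} ≃
      ∀ i, powersetCard (m i) {x | g x = i} :=
    { toFun := fun S i => ⟨{x ∈ S.1 | g x = i},
        mem_powersetCard.2 ⟨filter_subset_filter _ (subset_univ _), S.2 i⟩⟩
      invFun := fun t => ⟨univ.biUnion fun i => t i, fun i => by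
        rw [filter_biUnion]; exact (mem_powersetCard.1 (t i).2).2⟩
      left_inv := fun S => Subtype.ext (biUnion_filter_eq_of_maps_to fun _ _ => mem_univ _)
      right_inv := fun t => funext fun i => Subtype.ext (filter_biUnion t i) }
  rw [Nat.card_congr e, Nat.card_pi]
  exact prod_congr rfl fun i _ => by rw [Nat.card_eq_finsetCard, card_powersetCard]

theorem card_compatible_shuffles {β : Type*} [PartialOrder β] [Fintype β] [DecidableEq β] {a b : ℕ}
    {ι : Fin (a + b) → β} {f₁ : Fin a → β} {f₂ : Fin b → β}
    (hι : Monotone ι) (hf₁ : Monotone f₁) (hf₂ : Monotone f₂)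
    (hfib : ∀ i, #{k | ι k = i} = #{x | f₁ x = i} + #{y | f₂ y = i}) :
    Nat.card {p : (Fin a → Fin (a + b)) × (Fin b → Fin (a + b)) //
      IsShuffle p.1 p.2 ∧ ι ∘ p.1 = f₁ ∧ ι ∘ p.2 = f₂} =
      ∏ i, (#{k | ι k = i}).choose #{x | f₁ x = i} := by
  rw [← card_finset_of_card_fiber]
  refine Nat.card_eq_of_bijective (fun p => ⟨univ.image p.1.1, fun i => ?_⟩) ⟨?_, ?_⟩
  · rw [card_filter_image_of_injective p.2.1.1.injective]
    exact congrArg (fun f => #{x | f x = i}) p.2.2.1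
  · intro p q h
    obtain ⟨h₁, h₂⟩ := p.2.1.eq_of_image_left_eq q.2.1 (congrArg Subtype.val h)
    exact Subtype.ext (Prod.ext h₁ h₂)
  · rintro ⟨S, hS⟩
    have hSa : #S = a := by
      rw [card_eq_sum_card_fiberwise (f := ι) (t := univ) fun _ _ => mem_univ _,
        sum_congr rfl fun i _ => hS i,
        ← card_eq_sum_card_fiberwise (f := f₁) (t := univ) fun _ _ => mem_univ _,
        card_univ, Fintype.card_fin]
    have hSc : #Sᶜ = b := by
      rw [card_compl, hSa, Fintype.card_fin, Nat.add_sub_cancel_left]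
    set p₁ := S.orderEmbOfFin hSa
    set p₂ := Sᶜ.orderEmbOfFin hSc
    have hp : IsShuffle p₁ p₂ := isShuffle_orderEmbOfFin S hSa hSc
    have hfib₁ (i : β) : #{x | ι (p₁ x) = i} = #{x | f₁ x = i} := by
      rw [← card_filter_image_of_injective p₁.injective, image_orderEmbOfFin_univ, hS]
    have h₁ : ι ∘ p₁ = f₁ := (hι.comp p₁.monotone).eq_of_card_fiber_eq hf₁ hfib₁
    have h₂ : ι ∘ p₂ = f₂ := (hι.comp p₂.monotone).eq_of_card_fiber_eq hf₂ fun i => by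
      have hsplit := card_fiber_eq_add_of_bijective_sumElim hp.2.2 ι i
      rw [hfib, hfib₁] at hsplit
      simp only [comp_apply]
      omega
    exact ⟨⟨(p₁, p₂), hp, h₁, h₂⟩, Subtype.ext (image_orderEmbOfFin_univ S hSa)⟩

section MatrixForms

variable {a b j m s u₁ u₂ : ℕ}

theorem of_sumElim_eq_oneHot (p₁ : Fin m → Fin j) (p₂ : Fin s → Fin j) :
    (Matrix.of fun r c => Sum.elim (fun p => if r = p₁ p then (1 : ℕ) else 0)
      (fun q => if r = p₂ q then 1 else 0) (finSumFinEquiv.symm c)) =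
      oneHot (Sum.elim p₁ p₂ ∘ finSumFinEquiv.symm) := by
  ext r c
  obtain ⟨x | y, rfl⟩ := finSumFinEquiv.surjective c <;> simp [oneHot]

theorem IsBrew.exists_oneHot {v ℓ : ℕ} {M : Matrix (Fin v) (Fin ℓ) ℕ} (hM : IsBrew M) :
    ∃ ι, Monotone ι ∧ M = oneHot ι := by
  obtain ⟨ι, hι, -, -, rfl⟩ := hM
  exact ⟨ι, hι, rfl⟩

theorem IsQSH.exists_oneHot {M : Matrix (Fin j) (Fin (m + s)) ℕ} (hM : IsQSH M) :
    ∃ ι κ, StrictMono ι ∧ StrictMono κ ∧ M = oneHot (Sum.elim ι κ ∘ finSumFinEquiv.symm) := by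
  obtain ⟨ι, κ, hι, hκ, -, rfl⟩ := hM
  exact ⟨ι, κ, hι, hκ, of_sumElim_eq_oneHot ι κ⟩

theorem isSH_iff {P : Matrix (Fin (a + b)) (Fin (a + b)) ℕ} :
    IsSH P ↔ ∃ p₁ p₂, IsShuffle p₁ p₂ ∧ P = oneHot (Sum.elim p₁ p₂ ∘ finSumFinEquiv.symm) := by
  simp only [IsSH, IsShuffle, of_sumElim_eq_oneHot, and_assoc]

theorem oneHot_sumElim_inj {α : Type*} [DecidableEq α] {g₁ h₁ : Fin m → α} {g₂ h₂ : Fin s → α} :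
    oneHot (Sum.elim g₁ g₂ ∘ finSumFinEquiv.symm) =
        oneHot (Sum.elim h₁ h₂ ∘ finSumFinEquiv.symm) ↔ g₁ = h₁ ∧ g₂ = h₂ := by
  rw [oneHot_injective.eq_iff, finSumFinEquiv.symm.surjective.injective_comp_right.eq_iff,
    Sum.elim_eq_iff]

theorem oneHot_mul_oneHot_sumElim {α : Type*} [DecidableEq α]
    (ι : Fin j → α) (p₁ : Fin m → Fin j) (p₂ : Fin s → Fin j) :
    oneHot ι * oneHot (Sum.elim p₁ p₂ ∘ finSumFinEquiv.symm) =
      oneHot (Sum.elim (ι ∘ p₁) (ι ∘ p₂) ∘ finSumFinEquiv.symm) := by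
  rw [oneHot_mul_oneHot, ← comp_assoc, Sum.comp_elim]

theorem oneHot_sumElim_mul_blockDiag (g₁ : Fin u₁ → Fin j) (g₂ : Fin u₂ → Fin j)
    (f₁ : Fin a → Fin u₁) (f₂ : Fin b → Fin u₂) :
    oneHot (Sum.elim g₁ g₂ ∘ finSumFinEquiv.symm) * blockDiag (oneHot f₁) (oneHot f₂) =
      oneHot (Sum.elim (g₁ ∘ f₁) (g₂ ∘ f₂) ∘ finSumFinEquiv.symm) := by
  rw [blockDiag, fromBlocks_oneHot, reindex_oneHot, oneHot_mul_oneHot]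
  congr 1
  funext c
  obtain ⟨x | y, rfl⟩ := finSumFinEquiv.surjective c <;> simp

end MatrixForms

theorem card_fibre_eq_card_compatible_shuffles {a b j : ℕ} {ι : Fin (a + b) → Fin j}
    {f₁ : Fin a → Fin j} {f₂ : Fin b → Fin j} (hU : IsBrew (oneHot ι)) (hι : Monotone ι)
    (hfib : ∀ i, #{k | ι k = i} = #{x | f₁ x = i} + #{y | f₂ y = i}) :
    Nat.card {UP : Matrix (Fin j) (Fin (a + b)) ℕ × Matrix (Fin (a + b)) (Fin (a + b)) ℕ //
        IsBrew UP.1 ∧ IsSH UP.2 ∧ UP.1 * UP.2 = oneHot (Sum.elim f₁ f₂ ∘ finSumFinEquiv.symm)} =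
      Nat.card {p : (Fin a → Fin (a + b)) × (Fin b → Fin (a + b)) //
        IsShuffle p.1 p.2 ∧ ι ∘ p.1 = f₁ ∧ ι ∘ p.2 = f₂} := by
  refine (Nat.card_eq_of_bijective (fun p => ⟨(oneHot ι, oneHot (Sum.elim p.1.1 p.1.2 ∘
    finSumFinEquiv.symm)), hU, isSH_iff.2 ⟨_, _, p.2.1, rfl⟩, by
      rw [oneHot_mul_oneHot_sumElim, p.2.2.1, p.2.2.2]⟩) ⟨?_, ?_⟩).symm
  · intro p q h
    obtain ⟨h₁, h₂⟩ := oneHot_sumElim_inj.1 (congrArg (fun UP => UP.1.2) h)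
    exact Subtype.ext (Prod.ext h₁ h₂)
  · rintro ⟨⟨U, P⟩, ⟨ι', hι', -, -, hU'⟩, hP, hUP⟩
    obtain rfl : U = oneHot ι' := hU'
    obtain ⟨q₁, q₂, hq, rfl⟩ := isSH_iff.1 hP
    obtain ⟨h₁, h₂⟩ := oneHot_sumElim_inj.1 ((oneHot_mul_oneHot_sumElim ι' q₁ q₂).symm.trans hUP)
    obtain rfl : ι' = ι := hι'.eq_of_card_fiber_eq hι fun i => by
      rw [hfib, card_fiber_eq_add_of_bijective_sumElim hq.2.2, ← h₁, ← h₂]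
      rfl
    exact ⟨⟨(q₁, q₂), hq, h₁, h₂⟩, rfl⟩

theorem brewFact_oneHot {v ℓ : ℕ} (f : Fin ℓ → Fin v) :
    brewFact (oneHot f) = ∏ i, (#{c | f c = i}).factorial := by
  simp only [brewFact, sum_oneHot_apply]

theorem prod_factorial_card_fiber_comp {α β γ : Type*} [Fintype α] [Fintype β] [Fintype γ]
    [DecidableEq β] [DecidableEq γ] (f : α → β) {e : β → γ} (he : Injective e) :
    ∏ i, (#{x | e (f x) = i}).factorial = ∏ p, (#{x | f x = p}).factorial := by
  refine (Fintype.prod_of_injective e he _ _ (fun i hi => ?_) fun p => ?_).symm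
  · rw [filter_false_of_mem fun x _ hx => hi ⟨f x, hx⟩, card_empty, Nat.factorial_zero]
  · simp_rw [he.eq_iff]

theorem card_fibre_N_general (a b j u₁ u₂ : ℕ)
    (W U : Matrix (Fin j) (Fin (a + b)) ℕ) (P : Matrix (Fin (a + b)) (Fin (a + b)) ℕ)
    (A : Matrix (Fin j) (Fin (u₁ + u₂)) ℕ)
    (U₁ : Matrix (Fin u₁) (Fin a) ℕ) (U₂ : Matrix (Fin u₂) (Fin b) ℕ)
    (hU : IsBrew U) (hP : IsSH P) (hW : W = U * P)
    (hA : IsQSH A) (hU₁ : IsBrew U₁) (hU₂ : IsBrew U₂)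
    (hdec : W = A * blockDiag U₁ U₂) :
    Nat.card {UP : Matrix (Fin j) (Fin (a + b)) ℕ ×
        Matrix (Fin (a + b)) (Fin (a + b)) ℕ //
        IsBrew UP.1 ∧ IsSH UP.2 ∧ UP.1 * UP.2 = W} *
      (brewFact U₁ * brewFact U₂) = brewFact U := by
  obtain ⟨ι, hι, rfl⟩ := hU.exists_oneHot
  obtain ⟨ι₁, hι₁, rfl⟩ := hU₁.exists_oneHot
  obtain ⟨ι₂, hι₂, rfl⟩ := hU₂.exists_oneHot
  obtain ⟨ιA, κA, hιA, hκA, rfl⟩ := hA.exists_oneHot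
  obtain ⟨p₁, p₂, hp, rfl⟩ := isSH_iff.1 hP
  rw [oneHot_sumElim_mul_blockDiag] at hdec
  rw [oneHot_mul_oneHot_sumElim, hdec, oneHot_sumElim_inj] at hW
  have hfib (i : Fin j) :
      #{k | ι k = i} = #{x | (ιA ∘ ι₁) x = i} + #{y | (κA ∘ ι₂) y = i} := by
    rw [card_fiber_eq_add_of_bijective_sumElim hp.2.2, hW.1, hW.2]
    rfl
  subst hdec
  rw [card_fibre_eq_card_compatible_shuffles hU hι hfib,
    card_compatible_shuffles hι (hιA.monotone.comp hι₁) (hκA.monotone.comp hι₂) hfib,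
    brewFact_oneHot, brewFact_oneHot, brewFact_oneHot,
    ← prod_factorial_card_fiber_comp ι₁ hιA.injective,
    ← prod_factorial_card_fiber_comp ι₂ hκA.injective, ← prod_mul_distrib, ← prod_mul_distrib]
  refine prod_congr rfl fun i _ => ?_
  rw [hfib, ← mul_assoc, Nat.choose_symm_add]
  exact Nat.add_choose_mul_factorial_mul_factorial _ _

/-- for `W = U·P` in the image of `N_j`, decomposed (uniquely) as
`W = A · diag(U₁,U₂)` with `A ∈ QSH(u₁,u₂;j)`, `U₁ ∈ brew(u₁,a)`, `U₂ ∈ brew(u₂,b)`,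
the cardinality of the fibre `N_j⁻¹(W)` equals `U! / (U₁!·U₂!)`  (stated in the
equivalent multiplied-out form). -/
theorem card_fibre_N (a b j u₁ u₂ : ℕ) (ha : 0 < a) (hb : 0 < b) (hj : 0 < j)
    (W U : Matrix (Fin j) (Fin (a + b)) ℕ) (P : Matrix (Fin (a + b)) (Fin (a + b)) ℕ)
    (A : Matrix (Fin j) (Fin (u₁ + u₂)) ℕ)
    (U₁ : Matrix (Fin u₁) (Fin a) ℕ) (U₂ : Matrix (Fin u₂) (Fin b) ℕ)
    (hU : IsBrew U) (hP : IsSH P) (hW : W = U * P)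
    (hA : IsQSH A) (hU₁ : IsBrew U₁) (hU₂ : IsBrew U₂)
    (hdec : W = A * blockDiag U₁ U₂) :
    Nat.card {UP : Matrix (Fin j) (Fin (a + b)) ℕ ×
        Matrix (Fin (a + b)) (Fin (a + b)) ℕ //
        IsBrew UP.1 ∧ IsSH UP.2 ∧ UP.1 * UP.2 = W} *
      (brewFact U₁ * brewFact U₂) = brewFact U :=
  card_fibre_N_general a b j u₁ u₂ W U P A U₁ U₂ hU hP hW hA hU₁ hU₂ hdec
end

section
/- Let H be a graded connected commutative bialgebra over a ℚ-algebra K with Eulerian idempotent 𝔢 = log^*(id). Then ker 𝔢 = K·1 + (ker ε)², where (ker ε)² is the K-submodule of H spanned by products of two elements of the augmentation ideal, and the image of 𝔢 is isomorphic as a K-module to the quotient (ker ε)/(ker ε)² of indecomposables. -/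
open TensorProduct
section ConvolutionDefs

variable (K H : Type*) [CommRing K] [Ring H] [Bialgebra K H]

/-- Convolution product of linear endomorphisms of a bialgebra:
`f * g := m ∘ (f ⊗ g) ∘ Δ`. -/
noncomputable def conv (f g : H →ₗ[K] H) : H →ₗ[K] H :=
  (LinearMap.mul' K H) ∘ₗ (TensorProduct.map f g) ∘ₗ (Coalgebra.comul : H →ₗ[K] H ⊗[K] H)

/-- The unit of the convolution algebra: `η ∘ ε`. -/
noncomputable def unitCounit : H →ₗ[K] H :=
  (Algebra.linearMap K H) ∘ₗ (Coalgebra.counit : H →ₗ[K] K)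

/-- Convolution powers, with `f^{*0} = η∘ε` (the convolution unit) and
`f^{*(k+1)} = f * f^{*k}`. -/
noncomputable def convPow (f : H →ₗ[K] H) : ℕ → (H →ₗ[K] H)
  | 0 => unitCounit K H
  | n + 1 => conv K H f (convPow f n)

end ConvolutionDefs

/-!
Write `π = id - η ∘ ε`, so that `𝔢 = log (1 + π)` in the convolution algebra, the series being
locally finite. As `H` is commutative, multiplication `m : H ⊗ H → H` is a coalgebra map, so
precomposition with `m` is an algebra map of convolution algebras. It sends `id` to `id ⊗ id`,
hence `π` to `a + b + ab` with the commuting elements `a = π ⊗ ηε` and `b = ηε ⊗ π`: thus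
`𝔢 ∘ m = log (1 + F (a, b))` for the multiplicative formal group law `F (X, Y) = X + Y + XY`,
which formally is `log (1 + a) + log (1 + b)`. Truncated at degree `n`, the mixed coefficients of
total degree `≤ n` vanish; on `x ⊗ y` with `ε x = ε y = 0` the pure terms die, and so do those of
high degree by local nilpotence of `π`. Hence `𝔢` kills `1` and `(ker ε)²`, while `𝔢 ≡ π` modulo
`(ker ε)²`; this gives the kernel, and `Im 𝔢 = 𝔢 (ker ε) ≅ ker ε / (ker ε)²`.
-/

open WithConv Polynomial

section TruncLog

variable (K : Type*) [CommSemiring K] [Algebra ℚ K]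

/-- The `n`-th partial sum of `log (1 + r) = ∑ (-1)^k r^(k+1) / (k+1)`. -/
noncomputable def truncLog {R : Type*} [Semiring R] [Algebra K R] (n : ℕ) (r : R) : R :=
  ∑ k ∈ Finset.range n, algebraMap ℚ K ((-1) ^ k / (k + 1)) • r ^ (k + 1)

lemma AlgHom.map_truncLog {R S : Type*} [Semiring R] [Algebra K R] [Semiring S] [Algebra K S]
    (φ : R →ₐ[K] S) (n : ℕ) (r : R) : φ (truncLog K n r) = truncLog K n (φ r) := by
  simp [truncLog, map_sum, map_smul, map_pow]

end TruncLog

namespace Polynomial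

lemma coeff_coeff_pow_eq_zero_of_lt {R : Type*} [CommSemiring R] {Q : R[X][X]}
    (hQ : (Q.coeff 0).coeff 0 = 0) {n i j : ℕ} (h : i + j < n) :
    ((Q ^ n).coeff i).coeff j = 0 := by
  induction n generalizing i j with
  | zero => omega
  | succ n ih =>
    rw [pow_succ', coeff_mul, finsetSum_coeff]
    refine Finset.sum_eq_zero fun ab hab => ?_
    rw [coeff_mul]
    refine Finset.sum_eq_zero fun cd hcd => ?_
    rw [Finset.HasAntidiagonal.mem_antidiagonal] at hab hcd
    rcases Nat.eq_zero_or_pos (ab.1 + cd.1) with h0 | h0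
    · rw [show ab.1 = 0 by omega, show cd.1 = 0 by omega, hQ, zero_mul]
    · rw [ih (by omega), mul_zero]

lemma coeff_coeff_eq_zero_of_one_add_X_mul_eq {R : Type*} [CommRing R] {D Q : R[X][X]}
    (hD : (1 + X) * D = 1 - Q) {n : ℕ} (hQ : ∀ a b, a + b < n → (Q.coeff a).coeff b = 0)
    {b : ℕ} (hb : 1 ≤ b) : ∀ a, a + b < n → (D.coeff a).coeff b = 0 := by
  have hcoeff (a : ℕ) (h : a + b < n) :
      ((((1 + X) * D).coeff a).coeff b) = 0 := by
    rw [hD, coeff_sub, coeff_sub, hQ a b h, coeff_one]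
    split_ifs <;> simp [coeff_one, show b ≠ 0 by omega]
  intro a
  induction a with
  | zero => simpa [add_mul] using hcoeff 0
  | succ a ih =>
    intro h
    simpa [add_mul, coeff_X_mul, ih (by omega)] using hcoeff (a + 1) h

lemma derivative_truncLog (K : Type*) [CommRing K] [Algebra ℚ K] {A : Type*} [CommRing A]
    [Algebra K A] (n : ℕ) (p : A[X]) :
    derivative (truncLog K n p) = (∑ k ∈ Finset.range n, (-p) ^ k) * derivative p := by
  rw [truncLog, map_sum, Finset.sum_mul]
  refine Finset.sum_congr rfl fun k _ => ?_
  have hk : algebraMap K A[X] (algebraMap ℚ K ((-1) ^ k / (k + 1))) * C ((k : A) + 1) =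
      (-1) ^ k := by
    rw [show C ((k : A) + 1) = algebraMap K A[X] (algebraMap ℚ K (k + 1)) by simp, ← map_mul,
      ← map_mul, div_mul_cancel₀ _ (by positivity)]
    simp
  rw [derivative_smul, derivative_pow_succ, Algebra.smul_def, neg_pow p]
  linear_combination (p ^ k * derivative p) * hk

variable (R : Type*) [CommSemiring R] in
/-- The multiplicative formal group law `X + Y + XY`, with `C X` playing `X` and `X` playing `Y`. -/
noncomputable def mulFGL : R[X][X] := C X + X + C X * X

variable (K : Type*) [CommRing K] [Algebra ℚ K]

lemma one_add_X_mul_derivative_truncLog_mulFGL (n : ℕ) :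
    (1 + X) * derivative (truncLog K n (mulFGL K)) = 1 - (-mulFGL K) ^ n := by
  rw [derivative_truncLog, ← geom_sum_mul_neg]
  simp only [mulFGL, derivative_add, derivative_mul, derivative_C, derivative_X]
  ring

variable {K} in
/-- The truncated `log (1 + F) = log (1 + X) + log (1 + Y)` has no mixed terms of total degree
`≤ n`: as `1 + F = (1 + X) (1 + Y)`, its `Y`-derivative is `1 / (1 + Y)` up to degree `n`. -/
lemma coeff_coeff_truncLog_mulFGL_eq_zero {n i j : ℕ} (hi : 1 ≤ i) (hj : 1 ≤ j) (h : i + j ≤ n) :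
    ((truncLog K n (mulFGL K)).coeff i).coeff j = 0 := by
  obtain ⟨a, rfl⟩ : ∃ a, i = a + 1 := ⟨i - 1, by omega⟩
  have hD := coeff_coeff_eq_zero_of_one_add_X_mul_eq (one_add_X_mul_derivative_truncLog_mulFGL K n)
    (fun a b h => coeff_coeff_pow_eq_zero_of_lt (by simp [mulFGL]) h) hj a (by omega)
  have hunit : IsUnit ((a : K) + 1) := by
    simpa using (Nat.cast_add_one_ne_zero (R := ℚ) a).isUnit.map (algebraMap ℚ K)
  rwa [coeff_derivative, ← C_eq_natCast, ← C_1, ← C_add, coeff_mul_C, hunit.mul_left_eq_zero] at hD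

end Polynomial

namespace LinearMap

section TensorConv

variable {R A C D : Type*} [CommSemiring R] [CommSemiring A] [Algebra R A]
  [AddCommMonoid C] [Module R C] [AddCommMonoid D] [Module R D]

noncomputable def tensorConv (f : WithConv (C →ₗ[R] A)) (g : WithConv (D →ₗ[R] A)) :
    WithConv (C ⊗[R] D →ₗ[R] A) :=
  toConv (mul' R A ∘ₗ TensorProduct.map f.ofConv g.ofConv)

@[simp]
lemma tensorConv_tmul (f : WithConv (C →ₗ[R] A)) (g : WithConv (D →ₗ[R] A)) (c : C) (d : D) :
    tensorConv f g (c ⊗ₜ d) = f c * g d := rfl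

variable [Coalgebra R C] [Coalgebra R D]

lemma tensorConv_mul_tensorConv (f f' : WithConv (C →ₗ[R] A)) (g g' : WithConv (D →ₗ[R] A)) :
    tensorConv f g * tensorConv f' g' = tensorConv (f * f') (g * g') := by
  have := algHom_comp_convMul_distrib (Algebra.TensorProduct.lmul' R (S := A))
    (toConv (TensorProduct.map f.ofConv g.ofConv)) (toConv (TensorProduct.map f'.ofConv g'.ofConv))
  rw [TensorProduct.map_convMul_map] at this
  exact WithConv.ext this.symm

@[simp]
lemma tensorConv_one_one :
    tensorConv (1 : WithConv (C →ₗ[R] A)) (1 : WithConv (D →ₗ[R] A)) = 1 := by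
  ext c d
  simp [tensorConv, mul_comm]

lemma tensorConv_add_left (f f' : WithConv (C →ₗ[R] A)) (g : WithConv (D →ₗ[R] A)) :
    tensorConv (f + f') g = tensorConv f g + tensorConv f' g := by
  ext c d; simp [add_mul]

lemma tensorConv_add_right (f : WithConv (C →ₗ[R] A)) (g g' : WithConv (D →ₗ[R] A)) :
    tensorConv f (g + g') = tensorConv f g + tensorConv f g' := by
  ext c d; simp [mul_add]

lemma commute_tensorConv_one_tensorConv (f : WithConv (C →ₗ[R] A)) (g : WithConv (D →ₗ[R] A)) :
    Commute (tensorConv f 1) (tensorConv 1 g) := by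
  simp only [Commute, SemiconjBy, tensorConv_mul_tensorConv, mul_one, one_mul]

lemma tensorConv_pow (f : WithConv (C →ₗ[R] A)) (g : WithConv (D →ₗ[R] A)) (n : ℕ) :
    tensorConv f g ^ n = tensorConv (f ^ n) (g ^ n) := by
  induction n with
  | zero => simp
  | succ n ih => rw [pow_succ, ih, tensorConv_mul_tensorConv, pow_succ, pow_succ]

/-- Evaluation at `C X ↦ f ⊗ 1` and `X ↦ 1 ⊗ g`, which commute even though the convolution
algebra of `C ⊗ D` need not be commutative. -/
noncomputable def evalTensorConv (f : WithConv (C →ₗ[R] A)) (g : WithConv (D →ₗ[R] A)) :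
    R[X][X] →ₐ[R] WithConv (C ⊗[R] D →ₗ[R] A) :=
  eval₂AlgHom (aeval (tensorConv f 1)) (tensorConv 1 g) fun p => by
    rw [aeval_eq_sum_range]
    exact Commute.sum_left _ _ _ fun i _ =>
      ((commute_tensorConv_one_tensorConv f g).pow_left i).smul_left _

lemma evalTensorConv_apply_tmul (f : WithConv (C →ₗ[R] A)) (g : WithConv (D →ₗ[R] A))
    (Q : R[X][X]) (c : C) (d : D) :
    evalTensorConv f g Q (c ⊗ₜ d) =
      ∑ i ∈ Q.support, ∑ j ∈ (Q.coeff i).support,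
        (Q.coeff i).coeff j • ((f ^ j) c * (g ^ i) d) := by
  simp only [evalTensorConv, eval₂AlgHom_apply, eval₂_eq_sum, Polynomial.sum_def]
  rw [ofConv_sum, LinearMap.sum_apply]
  refine Finset.sum_congr rfl fun i _ => ?_
  rw [AlgHom.coe_toRingHom, aeval_def, eval₂_eq_sum, Polynomial.sum_def, Finset.sum_mul,
    ofConv_sum, LinearMap.sum_apply]
  refine Finset.sum_congr rfl fun j _ => ?_
  rw [← Algebra.smul_def, smul_mul_assoc, tensorConv_pow, tensorConv_pow, tensorConv_mul_tensorConv]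
  simp

lemma evalTensorConv_mulFGL (f : WithConv (C →ₗ[R] A)) (g : WithConv (D →ₗ[R] A)) :
    evalTensorConv f g (mulFGL R) =
      tensorConv f 1 + tensorConv 1 g + tensorConv f 1 * tensorConv 1 g := by
  simp [evalTensorConv, mulFGL]

end TensorConv

section PrecompConv

variable {R A B C : Type*} [CommSemiring R] [Semiring A] [Algebra R A]
  [AddCommMonoid B] [Module R B] [Coalgebra R B] [AddCommMonoid C] [Module R C] [Coalgebra R C]

noncomputable def precompConv (h : B →ₗc[R] C) :
    WithConv (C →ₗ[R] A) →ₐ[R] WithConv (B →ₗ[R] A) :=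
  AlgHom.ofLinearMap
    ((WithConv.linearEquiv R _).symm.toLinearMap ∘ₗ
      (LinearMap.lcomp R A h.toLinearMap) ∘ₗ (WithConv.linearEquiv R _).toLinearMap)
    (by ext b; simp)
    (fun f g => WithConv.ext (convMul_comp_coalgHom_distrib f g h))

end PrecompConv

section ConvMul

variable {R A C : Type*} [CommSemiring R] [Semiring A] [Algebra R A]

lemma convMul_apply_one [Semiring C] [Bialgebra R C] (f g : WithConv (C →ₗ[R] A)) :
    (f * g) 1 = f 1 * g 1 := by
  simp [Algebra.TensorProduct.one_def]

lemma convMul_apply_mem_mul [AddCommMonoid C] [Module R C] [Coalgebra R C]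
    {P Q : Submodule R A} {f g : WithConv (C →ₗ[R] A)} (hf : ∀ c, f c ∈ P) (hg : ∀ c, g c ∈ Q)
    (c : C) : (f * g) c ∈ P * Q := by
  rw [(Coalgebra.Repr.arbitrary R c).convMul_apply]
  exact Submodule.sum_mem _ fun i _ => Submodule.mul_mem_mul (hf _) (hg _)

end ConvMul

end LinearMap

section IsLogOneAdd

variable {K A C : Type*} [CommSemiring K] [Algebra ℚ K]

variable (K) in
/-- `e = log (1 + f)` in the convolution algebra, the series being eventually constant at every
point. -/
def IsLogOneAdd [Semiring A] [Algebra K A] [AddCommMonoid C] [Module K C] [Coalgebra K C]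
    (f : WithConv (C →ₗ[K] A)) (e : C →ₗ[K] A) : Prop :=
  ∀ c, ∃ N, ∀ n ≥ N, e c = truncLog K n f c

lemma IsLogOneAdd.pow_apply_eventually_eq_zero [Ring A] [Algebra K A] [AddCommMonoid C]
    [Module K C] [Coalgebra K C] {f : WithConv (C →ₗ[K] A)} {e : C →ₗ[K] A}
    (h : IsLogOneAdd K f e) (c : C) : ∃ M, ∀ k ≥ M, (f ^ k) c = 0 := by
  obtain ⟨N, hN⟩ := h c
  refine ⟨N + 1, fun k hk => ?_⟩
  obtain ⟨m, rfl⟩ : ∃ m, k = m + 1 := ⟨k - 1, by omega⟩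
  have hstep := (hN m (by omega)).symm.trans (hN (m + 1) (by omega))
  rw [truncLog, truncLog, Finset.sum_range_succ, ofConv_add, LinearMap.add_apply, left_eq_add,
    ofConv_smul, LinearMap.smul_apply] at hstep
  have hunit : IsUnit ((-1) ^ m / (m + 1) : ℚ) := by
    simp [Nat.cast_add_one_ne_zero]
  exact (hunit.map (algebraMap ℚ K)).smul_eq_zero.mp hstep

lemma IsLogOneAdd.apply_one_eq_zero [Semiring A] [Algebra K A] [Semiring C] [Bialgebra K C]
    {f : WithConv (C →ₗ[K] A)} {e : C →ₗ[K] A} (h : IsLogOneAdd K f e) (hf : f 1 = 0) :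
    e 1 = 0 := by
  obtain ⟨N, hN⟩ := h 1
  rw [hN N le_rfl, truncLog, ofConv_sum, LinearMap.sum_apply]
  exact Finset.sum_eq_zero fun k _ => by
    rw [ofConv_smul, LinearMap.smul_apply, pow_succ', LinearMap.convMul_apply_one, hf, zero_mul,
      smul_zero]

end IsLogOneAdd

namespace Bialgebra

variable (K H : Type*) [CommRing K] [CommRing H] [Bialgebra K H]

/-- `id - η ∘ ε`, the projection onto the augmentation ideal along `K • 1`. -/
noncomputable def augProj : WithConv (H →ₗ[K] H) := toConv LinearMap.id - 1

variable {K H}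

local notation "𝔞" => LinearMap.ker (Coalgebra.counit : H →ₗ[K] K)

lemma augProj_apply (x : H) : augProj K H x = x - algebraMap K H (Coalgebra.counit x) := rfl

lemma augProj_apply_mem (x : H) : augProj K H x ∈ 𝔞 := by
  simp [augProj_apply]

lemma augProj_one : augProj K H 1 = 0 := by
  simp [augProj_apply]

lemma ker_counit_mul_le (M : Submodule K H) : 𝔞 * M ≤ 𝔞 :=
  Submodule.mul_le.mpr fun a ha b _ => by simp_all [counit_mul]

lemma pow_succ_augProj_apply_mem (k : ℕ) (x : H) : (augProj K H ^ (k + 1)) x ∈ 𝔞 := by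
  rw [pow_succ']
  exact ker_counit_mul_le ⊤
    (LinearMap.convMul_apply_mem_mul augProj_apply_mem (fun _ => Submodule.mem_top) x)

lemma pow_add_two_augProj_apply_mem (k : ℕ) (x : H) : (augProj K H ^ (k + 2)) x ∈ 𝔞 * 𝔞 := by
  rw [pow_succ']
  exact LinearMap.convMul_apply_mem_mul augProj_apply_mem (pow_succ_augProj_apply_mem k) x

lemma precompConv_mulCoalgHom_augProj :
    LinearMap.precompConv (mulCoalgHom K H) (augProj K H) =
      LinearMap.tensorConv (augProj K H) 1 + LinearMap.tensorConv 1 (augProj K H) +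
        LinearMap.tensorConv (augProj K H) 1 * LinearMap.tensorConv 1 (augProj K H) := by
  have hid : toConv LinearMap.id = 1 + augProj K H := by rw [augProj]; abel
  have hmul : LinearMap.precompConv (mulCoalgHom K H) (toConv LinearMap.id) =
      LinearMap.tensorConv (toConv LinearMap.id) (toConv LinearMap.id) := by
    ext; rfl
  rw [augProj, map_sub, map_one, hmul, ← augProj, hid, LinearMap.tensorConv_mul_tensorConv]
  simp only [LinearMap.tensorConv_add_left, LinearMap.tensorConv_add_right,
    LinearMap.tensorConv_one_one, mul_one, one_mul]
  abel

variable [Algebra ℚ K] {e : H →ₗ[K] H}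

lemma _root_.IsLogOneAdd.apply_sub_augProj_apply_mem (h : IsLogOneAdd K (augProj K H) e)
    (z : H) : e z - augProj K H z ∈ 𝔞 * 𝔞 := by
  obtain ⟨N, hN⟩ := h z
  rw [hN (N + 1) (by omega), truncLog, Finset.sum_range_succ', ofConv_add, LinearMap.add_apply]
  simp only [pow_one, CharP.cast_eq_zero, zero_add, pow_zero, div_one, map_one, one_smul,
    add_sub_cancel_right, ofConv_sum, ofConv_smul, LinearMap.sum_apply, LinearMap.smul_apply]
  exact Submodule.sum_mem _ fun k _ => Submodule.smul_mem _ _ (pow_add_two_augProj_apply_mem k z)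

lemma _root_.IsLogOneAdd.apply_mul_eq_zero (h : IsLogOneAdd K (augProj K H) e) {x y : H}
    (hx : x ∈ 𝔞) (hy : y ∈ 𝔞) : e (x * y) = 0 := by
  set π := augProj K H
  obtain ⟨Mx, hMx⟩ := h.pow_apply_eventually_eq_zero x
  obtain ⟨My, hMy⟩ := h.pow_apply_eventually_eq_zero y
  obtain ⟨N, hN⟩ := h (x * y)
  set n := N + Mx + My
  have hlog : LinearMap.precompConv (mulCoalgHom K H) (truncLog K n π) =
      LinearMap.evalTensorConv π π (truncLog K n (mulFGL K)) := by
    rw [AlgHom.map_truncLog, AlgHom.map_truncLog, LinearMap.evalTensorConv_mulFGL π π,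
      precompConv_mulCoalgHom_augProj]
  have hpow_zero {z : H} (hz : z ∈ 𝔞) : (π ^ 0) z = 0 := by
    rw [pow_zero, LinearMap.convOne_apply, LinearMap.mem_ker.mp hz, map_zero]
  calc e (x * y) = LinearMap.precompConv (mulCoalgHom K H) (truncLog K n π) (x ⊗ₜ y) :=
        hN n (by omega)
    _ = 0 := by
      rw [hlog, LinearMap.evalTensorConv_apply_tmul]
      refine Finset.sum_eq_zero fun i _ => Finset.sum_eq_zero fun j _ => ?_
      -- pure terms vanish as `ε x = ε y = 0`, high powers by local nilpotence of `π`, and the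
      -- remaining mixed terms have total degree `≤ n`, hence zero coefficient
      rcases Nat.eq_zero_or_pos j with rfl | hj
      · rw [hpow_zero hx, zero_mul, smul_zero]
      rcases Nat.eq_zero_or_pos i with rfl | hi
      · rw [hpow_zero hy, mul_zero, smul_zero]
      by_cases hjx : Mx ≤ j
      · rw [hMx j hjx, zero_mul, smul_zero]
      by_cases hiy : My ≤ i
      · rw [hMy i hiy, mul_zero, smul_zero]
      rw [coeff_coeff_truncLog_mulFGL_eq_zero hi hj (by omega), zero_smul]

lemma _root_.IsLogOneAdd.ker_eq (h : IsLogOneAdd K (augProj K H) e) :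
    LinearMap.ker e = Submodule.span K {1} ⊔ 𝔞 * 𝔞 := by
  apply le_antisymm
  · intro z hz
    have hsub := h.apply_sub_augProj_apply_mem z
    rw [LinearMap.mem_ker.mp hz, zero_sub, neg_mem_iff] at hsub
    refine Submodule.mem_sup.mpr ⟨algebraMap K H (Coalgebra.counit z), ?_, _, hsub, ?_⟩
    · exact Submodule.mem_span_singleton.mpr ⟨_, (Algebra.algebraMap_eq_smul_one _).symm⟩
    · rw [augProj_apply, add_sub_cancel]
  · rw [sup_le_iff, Submodule.span_le, Set.singleton_subset_iff, Submodule.mul_le]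
    exact ⟨h.apply_one_eq_zero augProj_one, fun x hx y hy => h.apply_mul_eq_zero hx hy⟩

lemma _root_.IsLogOneAdd.range_comp_subtype (h : IsLogOneAdd K (augProj K H) e) :
    LinearMap.range (e ∘ₗ (𝔞).subtype) = LinearMap.range e := by
  refine le_antisymm (LinearMap.range_comp_le_range _ _) ?_
  rintro _ ⟨z, rfl⟩
  refine ⟨⟨augProj K H z, augProj_apply_mem z⟩, ?_⟩
  simp [augProj_apply, Algebra.algebraMap_eq_smul_one, h.apply_one_eq_zero augProj_one]

lemma _root_.IsLogOneAdd.ker_comp_subtype (h : IsLogOneAdd K (augProj K H) e) :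
    LinearMap.ker (e ∘ₗ (𝔞).subtype) = (𝔞 * 𝔞).comap (𝔞).subtype := by
  rw [LinearMap.ker_comp, h.ker_eq]
  ext ⟨a, ha⟩
  simp only [Submodule.mem_comap, Submodule.subtype_apply]
  refine ⟨fun hmem => ?_, fun hmem => Submodule.mem_sup_right hmem⟩
  obtain ⟨p, hp, q, hq, rfl⟩ := Submodule.mem_sup.mp hmem
  obtain ⟨c, rfl⟩ := Submodule.mem_span_singleton.mp hp
  have hc : c = 0 := by
    simpa [LinearMap.mem_ker.mp (ker_counit_mul_le 𝔞 hq)] using ha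
  rwa [hc, zero_smul, zero_add]

noncomputable def _root_.IsLogOneAdd.rangeEquiv (h : IsLogOneAdd K (augProj K H) e) :
    LinearMap.range e ≃ₗ[K] 𝔞 ⧸ (𝔞 * 𝔞).comap (𝔞).subtype :=
  (LinearEquiv.ofEq _ _ h.range_comp_subtype).symm ≪≫ₗ
    (e ∘ₗ (𝔞).subtype).quotKerEquivRange.symm ≪≫ₗ Submodule.quotEquivOfEq _ _ h.ker_comp_subtype

end Bialgebra

lemma Submodule.span_setOf_mul_eq_mul {R A : Type*} [CommSemiring R] [Semiring A] [Algebra R A]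
    (M N : Submodule R A) : span R {x | ∃ a ∈ M, ∃ b ∈ N, x = a * b} = M * N := by
  rw [Submodule.mul_eq_span_mul_set]
  congr 1
  ext x
  simp [Set.mem_mul, eq_comm]

lemma convPow_eq_ofConv_pow {K H : Type*} [CommRing K] [Ring H] [Bialgebra K H]
    (f : H →ₗ[K] H) (n : ℕ) : convPow K H f n = (toConv f ^ n).ofConv := by
  induction n with
  | zero => rfl
  | succ n ih => rw [convPow, ih, pow_succ']; rfl

lemma sum_Icc_convPow_apply_eq_truncLog {K H : Type*} [CommRing K] [Algebra ℚ K] [Ring H]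
    [Bialgebra K H] (f : H →ₗ[K] H) (n : ℕ) (a : H) :
    ∑ k ∈ Finset.Icc 1 n, algebraMap ℚ K ((-1) ^ (k - 1) / k) • convPow K H f k a =
      truncLog K n (toConv f) a := by
  rw [← Finset.Ico_add_one_right_eq_Icc, Finset.sum_Ico_eq_sum_range]
  simp [truncLog, convPow_eq_ofConv_pow, add_comm]

theorem eulerian_idempotent_ker_im_general {K H : Type*} [CommRing K] [Algebra ℚ K]
    [CommRing H] [Bialgebra K H]
    (e : H →ₗ[K] H)
    (he : ∀ a : H, ∃ N : ℕ, ∀ n ≥ N,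
      e a = ∑ k ∈ Finset.Icc 1 n,
        (algebraMap ℚ K ((-1 : ℚ) ^ (k - 1) / (k : ℚ))) •
          convPow K H (LinearMap.id - unitCounit K H) k a) :
    LinearMap.ker e =
      Submodule.span K {(1 : H)} ⊔
        Submodule.span K
          {x : H | ∃ a ∈ LinearMap.ker (Coalgebra.counit : H →ₗ[K] K),
            ∃ b ∈ LinearMap.ker (Coalgebra.counit : H →ₗ[K] K), x = a * b} ∧
    Nonempty
      ((LinearMap.range e) ≃ₗ[K]
        (LinearMap.ker (Coalgebra.counit : H →ₗ[K] K) ⧸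
          Submodule.comap (LinearMap.ker (Coalgebra.counit : H →ₗ[K] K)).subtype
            (Submodule.span K
              {x : H | ∃ a ∈ LinearMap.ker (Coalgebra.counit : H →ₗ[K] K),
                ∃ b ∈ LinearMap.ker (Coalgebra.counit : H →ₗ[K] K), x = a * b}))) := by
  have hlog : IsLogOneAdd K (Bialgebra.augProj K H) e := fun a =>
    (he a).imp fun N hN n hn => (hN n hn).trans (sum_Icc_convPow_apply_eq_truncLog _ n a)
  rw [Submodule.span_setOf_mul_eq_mul]
  exact ⟨hlog.ker_eq, ⟨hlog.rangeEquiv⟩⟩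

/-- for a commutative graded connected bialgebra `H` over a ℚ-algebra `K`
with Eulerian idempotent `𝔢 = log^*(id)`, one has `ker 𝔢 = K·1 + (ker ε)²` and
`Im 𝔢 ≅ (ker ε)/(ker ε)²` as `K`-modules. -/
theorem eulerian_idempotent_ker_im {K H : Type*} [CommRing K] [Algebra ℚ K]
    [CommRing H] [Bialgebra K H]
    (𝒜 : ℕ → Submodule K H)
    (hinternal : DirectSum.IsInternal 𝒜)
    (hconnected : 𝒜 0 = (1 : Submodule K H))
    (hmul : ∀ i j, 𝒜 i * 𝒜 j ≤ 𝒜 (i + j))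
    (hcomul : ∀ n, ∀ x ∈ 𝒜 n,
      (Coalgebra.comul : H →ₗ[K] H ⊗[K] H) x ∈
        ⨆ (p : ℕ × ℕ) (_ : p.1 + p.2 = n),
          LinearMap.range (TensorProduct.map (𝒜 p.1).subtype (𝒜 p.2).subtype))
    (e : H →ₗ[K] H)
    (he : ∀ a : H, ∃ N : ℕ, ∀ n ≥ N,
      e a = ∑ k ∈ Finset.Icc 1 n,
        (algebraMap ℚ K ((-1 : ℚ) ^ (k - 1) / (k : ℚ))) •
          convPow K H (LinearMap.id - unitCounit K H) k a) :
    LinearMap.ker e =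
      Submodule.span K {(1 : H)} ⊔
        Submodule.span K
          {x : H | ∃ a ∈ LinearMap.ker (Coalgebra.counit : H →ₗ[K] K),
            ∃ b ∈ LinearMap.ker (Coalgebra.counit : H →ₗ[K] K), x = a * b} ∧
    Nonempty
      ((LinearMap.range e) ≃ₗ[K]
        (LinearMap.ker (Coalgebra.counit : H →ₗ[K] K) ⧸
          Submodule.comap (LinearMap.ker (Coalgebra.counit : H →ₗ[K] K)).subtype
            (Submodule.span K
              {x : H | ∃ a ∈ LinearMap.ker (Coalgebra.counit : H →ₗ[K] K),
                ∃ b ∈ LinearMap.ker (Coalgebra.counit : H →ₗ[K] K), x = a * b}))) :=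
  eulerian_idempotent_ker_im_general e he
end
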